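/- Let E be a complex Banach space, U ⊆ ℂ open, and c : ℂ → E a map such that for every continuous complex-linear functional λ : E → ℂ the composition λ ∘ c is holomorphic on U. Then c is holomorphic (complex differentiable) on U. (Dunford's theorem; this underlies the definition of holomorphic curves via functionals in the convenient calculus of holomorphic mappings.) -/

import Mathlib

/-!
By the uniform boundedness principle, difference quotients of `c` that are bounded after every
functional are bounded in norm, so `c` inherits local Lipschitz bounds from the scalar functions
`l ∘ c`; in particular it is continuous. Continuity makes the vector-valued Cauchy integral of `c`
available, and since functionals separate points and commute with the integral, the scalar Cauchy
formulas for the `l ∘ c` show that `c` is its own Cauchy integral, hence analytic.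
-/

open Metric Complex NormedSpace Real

section DualBounds

variable {𝕜 E : Type*} [RCLike 𝕜] [NormedAddCommGroup E] [NormedSpace 𝕜 E]

theorem exists_norm_le_of_forall_dual_bounded {ι : Type*} {v : ι → E}
    (h : ∀ l : StrongDual 𝕜 E, ∃ C, ∀ i, ‖l (v i)‖ ≤ C) : ∃ C, ∀ i, ‖v i‖ ≤ C := by
  obtain ⟨C, hC⟩ := banach_steinhaus (g := fun i => inclusionInDoubleDual 𝕜 E (v i)) h
  exact ⟨C, fun i => (inclusionInDoubleDualLi 𝕜).norm_map (v i) ▸ hC i⟩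

theorem exists_lipschitzOnWith_of_forall_dual {α : Type*} [PseudoMetricSpace α] {f : α → E}
    {s : Set α} (h : ∀ l : StrongDual 𝕜 E, ∃ K, LipschitzOnWith K (fun x => l (f x)) s) :
    ∃ K, LipschitzOnWith K f s := by
  let quotient : {p : α × α // p.1 ∈ s ∧ p.2 ∈ s} → E :=
    fun p => ((dist p.1.1 p.1.2 : 𝕜))⁻¹ • (f p.1.1 - f p.1.2)
  have weakly_bounded : ∀ l : StrongDual 𝕜 E, ∃ C, ∀ p, ‖l (quotient p)‖ ≤ C := by
    intro l
    obtain ⟨K, hK⟩ := h l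
    refine ⟨K, fun ⟨⟨x, y⟩, hx, hy⟩ => ?_⟩
    have hxy : ‖l (f x) - l (f y)‖ ≤ K * dist x y := by
      simpa only [dist_eq_norm] using hK.dist_le_mul x hx y hy
    simp only [quotient, map_smul, map_sub, norm_smul, norm_inv, RCLike.norm_ofReal, abs_dist]
    rcases eq_or_ne (dist x y) 0 with h0 | h0
    · simp [h0]
    · calc (dist x y)⁻¹ * ‖l (f x) - l (f y)‖ ≤ (dist x y)⁻¹ * (K * dist x y) := by gcongr
        _ = K := by field_simp
  obtain ⟨C, hC⟩ := exists_norm_le_of_forall_dual_bounded weakly_bounded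
  refine ⟨C.toNNReal, LipschitzOnWith.of_dist_le_mul fun x hx y hy => ?_⟩
  rcases eq_or_ne (dist x y) 0 with h0 | h0
  · have hfxy : f x = f y := SeparatingDual.eq_iff_forall_dual_eq.2 fun l => by
      obtain ⟨K, hK⟩ := h l
      simpa [h0] using hK.dist_le_mul x hx y hy
    simp [hfxy, h0]
  · have hCxy := hC ⟨(x, y), hx, hy⟩
    simp only [quotient, norm_smul, norm_inv, RCLike.norm_ofReal, abs_dist] at hCxy
    rw [dist_eq_norm (f x)]
    calc ‖f x - f y‖ = dist x y * ((dist x y)⁻¹ * ‖f x - f y‖) := by field_simp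
      _ ≤ dist x y * C := by gcongr
      _ ≤ C.toNNReal * dist x y := by rw [mul_comm]; gcongr; exact Real.le_coe_toNNReal C

end DualBounds

theorem DifferentiableOn.exists_lipschitzOnWith_closedBall {f : ℂ → ℂ} {U : Set ℂ}
    (hf : DifferentiableOn ℂ f U) (hU : IsOpen U) {z : ℂ} {r : ℝ} (hr : closedBall z r ⊆ U) :
    ∃ K, LipschitzOnWith K f (closedBall z r) :=
  (((hf.contDiffOn hU (n := 1)).restrict_scalars ℝ).mono hr).exists_lipschitzOnWith one_ne_zero
    (convex_closedBall z r) (isCompact_closedBall z r)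

theorem ContinuousLinearMap.circleIntegral_comp_comm {E F : Type*} [NormedAddCommGroup E]
    [NormedSpace ℂ E] [CompleteSpace E] [NormedAddCommGroup F] [NormedSpace ℂ F] [CompleteSpace F]
    (L : E →L[ℂ] F) {f : ℂ → E} {c : ℂ} {R : ℝ} (hf : CircleIntegrable f c R) :
    ∮ z in C(c, R), L (f z) = L (∮ z in C(c, R), f z) := by
  simp only [circleIntegral, ← L.map_smul]
  exact L.intervalIntegral_comp_comm hf.out

section Scalarwise

variable {E : Type*} [NormedAddCommGroup E] [NormedSpace ℂ E]

theorem locallyLipschitzOn_of_forall_dual_differentiableOn {U : Set ℂ} (hU : IsOpen U)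
    {c : ℂ → E} (h : ∀ l : StrongDual ℂ E, DifferentiableOn ℂ (fun z => l (c z)) U) :
    LocallyLipschitzOn U c := by
  intro z hz
  obtain ⟨r, hr, hrU⟩ := nhds_basis_closedBall.mem_iff.mp (hU.mem_nhds hz)
  obtain ⟨K, hK⟩ := exists_lipschitzOnWith_of_forall_dual (𝕜 := ℂ)
    fun l => (h l).exists_lipschitzOnWith_closedBall hU hrU
  exact ⟨K, closedBall z r, mem_nhdsWithin_of_mem_nhds (closedBall_mem_nhds z hr), hK⟩

theorem two_pi_I_inv_smul_circleIntegral_sub_inv_smul_of_forall_dual [CompleteSpace E]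
    {c : ℂ → E} {z₀ w : ℂ} {r : ℝ} (hc : ContinuousOn c (sphere z₀ r))
    (h : ∀ l : StrongDual ℂ E, DiffContOnCl ℂ (fun z => l (c z)) (ball z₀ r))
    (hw : w ∈ ball z₀ r) :
    (2 * π * I : ℂ)⁻¹ • ∮ z in C(z₀, r), (z - w)⁻¹ • c z = c w := by
  have hr : 0 ≤ r := dist_nonneg.trans (mem_ball.mp hw).le
  have hint : CircleIntegrable (fun z => (z - w)⁻¹ • c z) z₀ r :=
    (((continuousOn_id.sub continuousOn_const).inv₀ fun z hz => sub_ne_zero.2 <| by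
      rintro rfl; exact (mem_ball.mp hw).ne (mem_sphere.mp hz)).smul hc).circleIntegrable hr
  refine (SeparatingDual.eq_iff_forall_dual_eq (R := ℂ)).2 fun l => ?_
  rw [map_smul, ← l.circleIntegral_comp_comm hint]
  simpa only [map_smul] using (h l).two_pi_i_inv_smul_circleIntegral_sub_inv_smul hw

theorem analyticOnNhd_of_forall_dual_differentiableOn [CompleteSpace E] {U : Set ℂ}
    (hU : IsOpen U) {c : ℂ → E} (hc : ContinuousOn c U)
    (h : ∀ l : StrongDual ℂ E, DifferentiableOn ℂ (fun z => l (c z)) U) :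
    AnalyticOnNhd ℂ c U := by
  intro z hz
  obtain ⟨r, hr, hrU⟩ := nhds_basis_closedBall.mem_iff.mp (hU.mem_nhds hz)
  have hcr : ContinuousOn c (sphere z r) := hc.mono (sphere_subset_closedBall.trans hrU)
  have hcauchy := hasFPowerSeriesOn_cauchy_integral (R := r.toNNReal)
    (by simpa [hr.le] using hcr.circleIntegrable hr.le) (Real.toNNReal_pos.2 hr)
  rw [Real.coe_toNNReal r hr.le] at hcauchy
  refine hcauchy.analyticAt.congr (Filter.eventually_of_mem (ball_mem_nhds z hr) fun w hw => ?_)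
  exact two_pi_I_inv_smul_circleIntegral_sub_inv_smul_of_forall_dual hcr
    (fun l => (h l).diffContOnCl_ball hrU) hw

end Scalarwise

/-- Dunford's theorem: a scalarwise holomorphic map into a complex Banach space
is holomorphic. -/
theorem holomorphic_of_scalarwise_holomorphic {E : Type*} [NormedAddCommGroup E]
    [NormedSpace ℂ E] [CompleteSpace E] (U : Set ℂ) (hU : IsOpen U) (c : ℂ → E)
    (h : ∀ l : E →L[ℂ] ℂ, DifferentiableOn ℂ (fun z => l (c z)) U) :
    DifferentiableOn ℂ c U :=
  have hc : ContinuousOn c U :=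
    (locallyLipschitzOn_of_forall_dual_differentiableOn hU h).continuousOn
  (analyticOnNhd_of_forall_dual_differentiableOn hU hc h).differentiableOn
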